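/- For a discrete stationary source on a finite alphabet X with distribution μ on X^∞, the asymptotic equipartition property with entropy rate h (i.e., −(1/n)·log μ_{1..n}(X_1,...,X_n) converges to h in probability) holds if and only if for every c ∈ (0,1), the minimum of (1/n)·log|S| over all subsets S ⊆ X^n with μ_{1..n}(S) ≥ c converges to h as n → ∞. -/

import Mathlib

open Finset MeasureTheory Filter Real

noncomputable section

/-- Marginal of a measure on infinite strings on the first `n` coordinates. -/
def marginal {X : Type} [Fintype X] [MeasurableSpace X] (μ : Measure (ℕ → X)) (n : ℕ) :
    Measure (Fin n → X) :=
  μ.map (fun ω (i : Fin n) => ω (i : ℕ))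

/-- The asymptotic equipartition property with entropy rate `h`:
`-(1/n) log₂ μ_{1..n}(X_1,...,X_n)` converges to `h` in probability. -/
def HasAEP {X : Type} [Fintype X] [MeasurableSpace X] (μ : Measure (ℕ → X)) (h : ℝ) : Prop :=
  ∀ ε : ℝ, 0 < ε →
    Tendsto (fun n : ℕ =>
        μ {ω : ℕ → X |
          ε < |(-(1 / (n : ℝ)) *
              Real.logb 2 ((marginal μ n {fun i : Fin n => ω (i : ℕ)}).toReal)) - h|})
      atTop (nhds 0)

/-- Minimum of `(1/n) log₂ |S|` over subsets `S ⊆ X^n` of probability at least `c`. -/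
def minLogCard {X : Type} [Fintype X] [MeasurableSpace X] (μ : Measure (ℕ → X)) (c : ℝ)
    (n : ℕ) : ℝ :=
  sInf {r : ℝ | ∃ S : Finset (Fin n → X),
    ENNReal.ofReal c ≤ marginal μ n (↑S : Set (Fin n → X)) ∧
    r = (1 / (n : ℝ)) * Real.logb 2 (S.card : ℝ)}

set_option linter.unusedSectionVars false
set_option linter.unusedVariables false


variable {α : Type*} [MeasurableSpace α]

lemma mem_atom_iff {x y : α} : y ∈ measurableAtom x ↔ ∀ s : Set α, x ∈ s → MeasurableSet s → y ∈ s := by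
  simp [measurableAtom]

lemma atom_symm {x y : α} (h : y ∈ measurableAtom x) : x ∈ measurableAtom y := by
  rw [mem_atom_iff]
  intro s hy hs
  by_contra hx
  exact (mem_of_mem_measurableAtom h hs.compl hx) hy

lemma atom_eq {x y : α} (h : y ∈ measurableAtom x) : measurableAtom y = measurableAtom x := by
  apply Set.Subset.antisymm
  · intro z hz
    rw [mem_atom_iff] at hz ⊢
    intro s hs hm
    exact hz s (mem_of_mem_measurableAtom h hm hs) hm
  · intro z hz
    rw [mem_atom_iff] at hz ⊢
    intro s hs hm
    exact hz s (mem_of_mem_measurableAtom (atom_symm h) hm hs) hm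

lemma meas_singleton_eq_atom (ν : Measure α) [Countable α] (x : α) :
    ν {x} = ν (measurableAtom x) := by
  apply le_antisymm
  · exact measure_mono (by simp)
  · conv_rhs => rw [measure_eq_iInf]
    apply le_iInf; intro t; apply le_iInf; intro ht; apply le_iInf; intro hm
    exact measure_mono (measurableAtom_subset hm (by simpa using ht))

lemma meas_singleton_congr (ν : Measure α) [Countable α] {x y : α}
    (h : y ∈ measurableAtom x) : ν {y} = ν {x} := by
  rw [meas_singleton_eq_atom, meas_singleton_eq_atom, atom_eq h]

lemma saturated_measurableSet [Countable α] {s : Set α}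
    (hsat : ∀ x ∈ s, measurableAtom x ⊆ s) : MeasurableSet s := by
  have : s = ⋃ x ∈ s, measurableAtom x := by
    apply Set.Subset.antisymm
    · intro x hx; exact Set.mem_biUnion hx (mem_measurableAtom_self x)
    · exact Set.iUnion₂_subset hsat
  rw [this]
  exact MeasurableSet.biUnion (Set.to_countable s)
    (fun x _ => MeasurableSet.measurableAtom_of_countable x)

lemma level_saturated (ν : Measure α) [Countable α] (P : ENNReal → Prop) :
    ∀ x ∈ {x | P (ν {x})}, measurableAtom x ⊆ {x | P (ν {x})} := by
  intro x hx y hy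
  simpa [Set.mem_setOf_eq, meas_singleton_congr ν hy] using hx

lemma level_measurableSet (ν : Measure α) [Countable α] (P : ENNReal → Prop) :
    MeasurableSet {x | P (ν {x})} :=
  saturated_measurableSet (level_saturated ν P)

lemma reps_lemma [Countable α] [Nonempty α] (ν : Measure α)
    {s : Set α} (hfin : s.Finite) (hsat : ∀ x ∈ s, measurableAtom x ⊆ s) {a : ℝ}
    (hlb : ∀ x ∈ s, ENNReal.ofReal a ≤ ν {x}) :
    ∃ S : Finset α, ν s ≤ ν ↑S ∧ (S.card : ENNReal) * ENNReal.ofReal a ≤ ν s := by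
  classical
  set pick : Set α → α := fun A => if h : A.Nonempty then h.some else Classical.arbitrary α with hpickdef
  set 𝒜 : Finset (Set α) := hfin.toFinset.image measurableAtom with h𝒜
  have hmem : ∀ A ∈ 𝒜, ∃ x ∈ s, measurableAtom x = A := by
    intro A hA
    obtain ⟨x, hx, rfl⟩ := Finset.mem_image.1 hA
    exact ⟨x, hfin.mem_toFinset.1 hx, rfl⟩
  have hpick : ∀ A ∈ 𝒜, pick A ∈ A := by
    intro A hA
    obtain ⟨x, _, rfl⟩ := hmem A hA
    have hne : (measurableAtom x).Nonempty := ⟨x, mem_measurableAtom_self x⟩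
    simpa [hpickdef, dif_pos hne] using hne.some_mem
  refine ⟨𝒜.image pick, ?_, ?_⟩
  · conv_rhs => rw [measure_eq_iInf]
    refine le_iInf fun t => le_iInf fun ht => le_iInf fun hm => measure_mono fun x hx => ?_
    have hA : measurableAtom x ∈ 𝒜 :=
      Finset.mem_image_of_mem _ (hfin.mem_toFinset.2 hx)
    have h1 : pick (measurableAtom x) ∈ measurableAtom x := hpick _ hA
    have h2 : pick (measurableAtom x) ∈ t := ht (by exact_mod_cast Finset.mem_image_of_mem pick hA)
    have : measurableAtom (pick (measurableAtom x)) ⊆ t := measurableAtom_subset hm h2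
    exact this (by rw [atom_eq h1]; exact mem_measurableAtom_self x)
  · have hdisj : (↑𝒜 : Set (Set α)).PairwiseDisjoint id := by
      intro A hA B hB hne
      obtain ⟨x, _, rfl⟩ := hmem A hA
      obtain ⟨y, _, rfl⟩ := hmem B hB
      rw [Function.onFun, Set.disjoint_left]
      intro z hzA hzB
      exact hne (by rw [← atom_eq hzA, ← atom_eq hzB])
    have hmeas : ∀ A ∈ 𝒜, MeasurableSet (id A) := by
      intro A hA
      obtain ⟨x, _, rfl⟩ := hmem A hA
      exact MeasurableSet.measurableAtom_of_countable x
    have hunion : (⋃ A ∈ 𝒜, id A) = s := by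
      apply Set.Subset.antisymm
      · refine Set.iUnion₂_subset fun A hA => ?_
        obtain ⟨x, hx, rfl⟩ := hmem A hA
        exact hsat x hx
      · intro x hx
        exact Set.mem_biUnion (Finset.mem_image_of_mem _ (hfin.mem_toFinset.2 hx))
          (mem_measurableAtom_self x)
    have hsum : ∑ A ∈ 𝒜, ν (id A) = ν s := by
      rw [← measure_biUnion_finset hdisj hmeas, hunion]
    have hcard : (𝒜.card : ENNReal) * ENNReal.ofReal a ≤ ∑ A ∈ 𝒜, ν (id A) := by
      rw [← nsmul_eq_mul]
      refine Finset.card_nsmul_le_sum _ _ _ fun A hA => ?_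
      obtain ⟨x, hx, rfl⟩ := hmem A hA
      calc ENNReal.ofReal a ≤ ν {x} := hlb x hx
        _ = ν (measurableAtom x) := meas_singleton_eq_atom ν x
    calc ((𝒜.image pick).card : ENNReal) * ENNReal.ofReal a
        ≤ (𝒜.card : ENNReal) * ENNReal.ofReal a := by
          gcongr; exact_mod_cast Finset.card_image_le
      _ ≤ ∑ A ∈ 𝒜, ν (id A) := hcard
      _ = ν s := hsum

lemma aux_lt {n L b : ℝ} (hn : 0 < n) : (-(1/n))*L < b ↔ -(n*b) < L := by
  rw [show (-(1/n))*L = -(L/n) by ring, neg_lt, lt_div_iff₀ hn]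
  constructor <;> intro h <;> nlinarith

lemma aux_gt {n L b : ℝ} (hn : 0 < n) : b < (-(1/n))*L ↔ L < -(n*b) := by
  rw [show (-(1/n))*L = -(L/n) by ring, lt_neg, div_lt_iff₀ hn]
  constructor <;> intro h <;> nlinarith

lemma scalar_lt {n : ℕ} (hn : 1 ≤ n) {t b : ℝ} (ht : 0 < t) :
    (-(1/(n:ℝ))) * logb 2 t < b ↔ (2:ℝ) ^ (-(n:ℝ)*b) < t := by
  have hnp : (0:ℝ) < n := by exact_mod_cast hn
  rw [aux_lt hnp, ← neg_mul, lt_logb_iff_rpow_lt one_lt_two ht]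

lemma scalar_gt {n : ℕ} (hn : 1 ≤ n) {t b : ℝ} (ht : 0 < t) :
    b < (-(1/(n:ℝ))) * logb 2 t ↔ t < (2:ℝ) ^ (-(n:ℝ)*b) := by
  have hnp : (0:ℝ) < n := by exact_mod_cast hn
  rw [aux_gt hnp, ← neg_mul, logb_lt_iff_lt_rpow one_lt_two ht]

lemma log_card_le {n k : ℕ} (hn : 1 ≤ n) (hk : 1 ≤ k) {b : ℝ}
    (hle : (k:ℝ) * 2^(-(n:ℝ)*b) ≤ 1) : (1/(n:ℝ)) * logb 2 (k:ℝ) ≤ b := by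
  have hnp : (0:ℝ) < n := by exact_mod_cast hn
  have hkp : (0:ℝ) < k := by exact_mod_cast hk
  have h2 : (0:ℝ) < 2^(-(n:ℝ)*b) := rpow_pos_of_pos two_pos _
  have h2' : (0:ℝ) < 2^((n:ℝ)*b) := rpow_pos_of_pos two_pos _
  have h2e : (2:ℝ)^(-(n:ℝ)*b) * 2^((n:ℝ)*b) = 1 := by
    rw [← rpow_add two_pos]; norm_num
  have hkle : (k:ℝ) ≤ 2^((n:ℝ)*b) := by
    nlinarith [mul_le_mul_of_nonneg_right hle (le_of_lt h2')]
  have := logb_le_logb_of_le one_lt_two hkp hkle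
  rw [logb_rpow two_pos (by norm_num)] at this
  calc (1/(n:ℝ)) * logb 2 (k:ℝ) ≤ (1/(n:ℝ)) * ((n:ℝ)*b) := by
        apply mul_le_mul_of_nonneg_left this; positivity
    _ = b := by field_simp

lemma log_card_ge {n k : ℕ} (hn : 1 ≤ n) {a b : ℝ} (ha : 0 < a)
    (hlow : a ≤ (k:ℝ) * 2^(-(n:ℝ)*b)) :
    b + (1/(n:ℝ)) * logb 2 a ≤ (1/(n:ℝ)) * logb 2 (k:ℝ) := by
  have hnp : (0:ℝ) < n := by exact_mod_cast hn
  have h2 : (0:ℝ) < 2^(-(n:ℝ)*b) := rpow_pos_of_pos two_pos _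
  have h2' : (0:ℝ) < 2^((n:ℝ)*b) := rpow_pos_of_pos two_pos _
  have hkge : a * 2^((n:ℝ)*b) ≤ (k:ℝ) := by
    rw [← le_div_iff₀ h2'] at *
    · calc a ≤ (k:ℝ) * 2^(-(n:ℝ)*b) := hlow
        _ = (k:ℝ) / 2^((n:ℝ)*b) := by
            rw [show -(n:ℝ)*b = -((n:ℝ)*b) by ring, rpow_neg (by norm_num : (0:ℝ) ≤ 2)]
            ring
  have hap : (0:ℝ) < a * 2^((n:ℝ)*b) := by positivity
  have := logb_le_logb_of_le one_lt_two hap hkge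
  rw [logb_mul (ne_of_gt ha) (ne_of_gt h2'), logb_rpow two_pos (by norm_num)] at this
  calc b + (1/(n:ℝ)) * logb 2 a = (1/(n:ℝ)) * (logb 2 a + (n:ℝ)*b) := by field_simp; ring
    _ ≤ (1/(n:ℝ)) * logb 2 (k:ℝ) := by
        apply mul_le_mul_of_nonneg_left this; positivity


variable {X : Type} [Fintype X] [MeasurableSpace X]

def proj (X : Type) (n : ℕ) : (ℕ → X) → (Fin n → X) := fun ω (i : Fin n) => ω (i : ℕ)

lemma measurable_proj (n : ℕ) : Measurable (proj X n) :=
  measurable_pi_lambda _ fun i => measurable_pi_apply _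

lemma marginal_isProb (μ : Measure (ℕ → X)) [IsProbabilityMeasure μ] (n : ℕ) :
    IsProbabilityMeasure (marginal μ n) :=
  Measure.isProbabilityMeasure_map (measurable_proj n).aemeasurable

lemma le_marginal (μ : Measure (ℕ → X)) (n : ℕ) (A : Set (Fin n → X)) :
    μ (proj X n ⁻¹' A) ≤ marginal μ n A :=
  Measure.le_map_apply (measurable_proj n).aemeasurable A

lemma marginal_apply (μ : Measure (ℕ → X)) (n : ℕ) {A : Set (Fin n → X)}
    (hA : MeasurableSet A) : marginal μ n A = μ (proj X n ⁻¹' A) :=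
  Measure.map_apply (measurable_proj n) hA

/-- The bad set for AEP at level ε. -/
def Bad (μ : Measure (ℕ → X)) (h ε : ℝ) (n : ℕ) : Set (Fin n → X) :=
  {x | ε < |(-(1 / (n : ℝ)) * Real.logb 2 ((marginal μ n {x}).toReal)) - h|}

def SmallSet (μ : Measure (ℕ → X)) (h ε : ℝ) (n : ℕ) : Set (Fin n → X) :=
  {x | marginal μ n {x} ≠ 0 ∧ marginal μ n {x} < ENNReal.ofReal ((2:ℝ) ^ (-(n:ℝ)*(h+ε)))}

def BigSet (μ : Measure (ℕ → X)) (h ε : ℝ) (n : ℕ) : Set (Fin n → X) :=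
  {x | ENNReal.ofReal ((2:ℝ) ^ (-(n:ℝ)*(h-ε))) < marginal μ n {x}}

def ZeroSet (μ : Measure (ℕ → X)) (n : ℕ) : Set (Fin n → X) :=
  {x | marginal μ n {x} = 0}

lemma aepSet_eq (μ : Measure (ℕ → X)) (h ε : ℝ) (n : ℕ) :
    {ω : ℕ → X | ε < |(-(1 / (n : ℝ)) *
        Real.logb 2 ((marginal μ n {fun i : Fin n => ω (i : ℕ)}).toReal)) - h|}
      = proj X n ⁻¹' (Bad μ h ε n) := rfl

variable (μ : Measure (ℕ → X)) [IsProbabilityMeasure μ]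

lemma mass_ne_top (n : ℕ) (x : Fin n → X) : marginal μ n {x} ≠ ⊤ := by
  have := marginal_isProb μ n
  exact measure_ne_top _ _

lemma zeroSet_null (n : ℕ) : marginal μ n (ZeroSet μ n) = 0 := by
  have : ZeroSet μ n ⊆ ⋃ x ∈ ZeroSet μ n, {x} := by
    intro x hx; exact Set.mem_biUnion hx rfl
  refine measure_mono_null this ?_
  rw [measure_biUnion_null_iff (Set.to_countable _)]
  exact fun x hx => hx

lemma bad_subset {h ε : ℝ} {n : ℕ} (hn : 1 ≤ n) :
    Bad μ h ε n ⊆ SmallSet μ h ε n ∪ BigSet μ h ε n ∪ ZeroSet μ n := by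
  intro x hx
  rcases eq_or_ne (marginal μ n {x}) 0 with h0 | h0
  · exact Or.inr h0
  left
  have hne := mass_ne_top μ n x
  have htp : 0 < (marginal μ n {x}).toReal := ENNReal.toReal_pos h0 hne
  rw [Bad, Set.mem_setOf_eq] at hx
  rcases lt_abs.1 hx with hlt | hlt
  · left
    refine ⟨h0, ?_⟩
    have h1 : h + ε < -(1 / (n : ℝ)) * Real.logb 2 ((marginal μ n {x}).toReal) := by linarith
    rw [scalar_gt hn htp] at h1
    rw [ENNReal.lt_ofReal_iff_toReal_lt hne]
    exact h1
  · right
    have h1 : -(1 / (n : ℝ)) * Real.logb 2 ((marginal μ n {x}).toReal) < h - ε := by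
      linarith
    rw [scalar_lt hn htp] at h1
    rw [show BigSet μ h ε n = {x | ENNReal.ofReal ((2:ℝ) ^ (-(n:ℝ)*(h-ε))) < marginal μ n {x}} from rfl]
    rw [Set.mem_setOf_eq, ENNReal.ofReal_lt_iff_lt_toReal (le_of_lt (rpow_pos_of_pos two_pos _)) hne]
    exact h1

lemma small_subset_bad {h ε : ℝ} {n : ℕ} (hn : 1 ≤ n) (hε : 0 < ε) :
    SmallSet μ h ε n ⊆ Bad μ h ε n := by
  intro x ⟨h0, hx⟩
  have hne := mass_ne_top μ n x
  have htp : 0 < (marginal μ n {x}).toReal := ENNReal.toReal_pos h0 hne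
  rw [ENNReal.lt_ofReal_iff_toReal_lt hne, ← scalar_gt hn htp] at hx
  rw [Bad, Set.mem_setOf_eq, lt_abs]
  left; linarith

lemma big_subset_bad {h ε : ℝ} {n : ℕ} (hn : 1 ≤ n) (hε : 0 < ε) :
    BigSet μ h ε n ⊆ Bad μ h ε n := by
  intro x hx
  rw [BigSet, Set.mem_setOf_eq] at hx
  have h0 : marginal μ n {x} ≠ 0 := by
    intro h0; rw [h0] at hx; simp at hx
  have hne := mass_ne_top μ n x
  have htp : 0 < (marginal μ n {x}).toReal := ENNReal.toReal_pos h0 hne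
  rw [ENNReal.ofReal_lt_iff_lt_toReal (le_of_lt (rpow_pos_of_pos two_pos _)) hne,
    ← scalar_lt hn htp] at hx
  rw [Bad, Set.mem_setOf_eq, lt_abs]
  right; linarith


section dlemmas
variable {X : Type} [Fintype X] [MeasurableSpace X]

def Dset (μ : Measure (ℕ → X)) (c : ℝ) (n : ℕ) : Set ℝ :=
  {r : ℝ | ∃ S : Finset (Fin n → X),
    ENNReal.ofReal c ≤ marginal μ n (↑S : Set (Fin n → X)) ∧
    r = (1 / (n : ℝ)) * Real.logb 2 (S.card : ℝ)}

lemma minLogCard_eq (μ : Measure (ℕ → X)) (c : ℝ) (n : ℕ) :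
    minLogCard μ c n = sInf (Dset μ c n) := rfl

variable (μ : Measure (ℕ → X)) [IsProbabilityMeasure μ]

lemma Dset_nonempty {c : ℝ} (hc : c ≤ 1) (n : ℕ) : (Dset μ c n).Nonempty := by
  haveI := marginal_isProb μ n
  refine ⟨_, Finset.univ, ?_, rfl⟩
  rw [Finset.coe_univ, measure_univ]
  exact ENNReal.ofReal_le_one.2 hc

lemma card_pos_of_meas {c : ℝ} (hc : 0 < c) {n : ℕ} {S : Finset (Fin n → X)}
    (hS : ENNReal.ofReal c ≤ marginal μ n (↑S : Set (Fin n → X))) : 1 ≤ S.card := by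
  rcases S.eq_empty_or_nonempty with rfl | hne
  · simp only [Finset.coe_empty, measure_empty, nonpos_iff_eq_zero] at hS
    exact absurd hS (ne_of_gt (ENNReal.ofReal_pos.2 hc))
  · exact Finset.card_pos.2 hne

lemma Dset_bddBelow {c : ℝ} (hc : 0 < c) (n : ℕ) : BddBelow (Dset μ c n) := by
  refine ⟨0, fun r hr => ?_⟩
  obtain ⟨S, hS, rfl⟩ := hr
  have hk : 1 ≤ S.card := card_pos_of_meas μ hc hS
  have : (0:ℝ) ≤ logb 2 (S.card : ℝ) :=
    logb_nonneg one_lt_two (by exact_mod_cast hk)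
  positivity

lemma meas_le_card_mul {α : Type*} [MeasurableSpace α] (ν : Measure α) (T : Finset α)
    (m : ENNReal) (hub : ∀ x ∈ T, ν {x} ≤ m) : ν ↑T ≤ T.card * m := by
  have h1 : ν ↑T ≤ ∑ x ∈ T, ν {x} := by
    have : (↑T : Set _) ⊆ ⋃ x ∈ T, {x} := by
      intro x hx; exact Set.mem_biUnion (by exact_mod_cast hx) rfl
    exact le_trans (measure_mono this) (measure_biUnion_finset_le T _)
  refine h1.trans ?_
  calc ∑ x ∈ T, ν {x} ≤ T.card • m := Finset.sum_le_card_nsmul T _ m hub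
    _ = T.card * m := nsmul_eq_mul _ _

lemma ennreal_count_le {k : ℕ} {t : ℝ} (ht : 0 ≤ t)
    (h : (k : ENNReal) * ENNReal.ofReal t ≤ 1) : (k:ℝ) * t ≤ 1 := by
  rw [← ENNReal.ofReal_natCast k, ← ENNReal.ofReal_mul (Nat.cast_nonneg k)] at h
  exact ENNReal.ofReal_le_one.1 h

lemma ennreal_count_ge {k : ℕ} {a t : ℝ} (ht : 0 ≤ t)
    (h : ENNReal.ofReal a ≤ (k : ENNReal) * ENNReal.ofReal t) : a ≤ (k:ℝ) * t := by
  rw [← ENNReal.ofReal_natCast k, ← ENNReal.ofReal_mul (Nat.cast_nonneg k)] at h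
  exact (ENNReal.ofReal_le_ofReal_iff (by positivity)).1 h

end dlemmas

section main
variable {X : Type} [Fintype X] [Nonempty X] [MeasurableSpace X]
variable (μ : Measure (ℕ → X)) [IsProbabilityMeasure μ]

lemma aep_bad (haep : HasAEP μ h) {ε : ℝ} (hε : 0 < ε) :
    Tendsto (fun n => μ (proj X n ⁻¹' (Bad μ h ε n))) atTop (nhds 0) := haep ε hε

lemma forward_upper {h : ℝ} (haep : HasAEP μ h) {c ε : ℝ} (hc0 : 0 < c) (hc1 : c < 1)
    (hε : 0 < ε) : ∀ᶠ n in atTop, minLogCard μ c n ≤ h + ε := by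
  have h1 : ∀ᶠ n in atTop, μ (proj X n ⁻¹' (Bad μ h ε n)) < ENNReal.ofReal (1 - c) :=
    (aep_bad μ haep hε).eventually_lt_const (ENNReal.ofReal_pos.2 (by linarith))
  filter_upwards [h1, eventually_ge_atTop 1] with n hbad hn
  haveI := marginal_isProb μ n
  set ν := marginal μ n with hν
  set Typ : Set (Fin n → X) :=
    {x | ENNReal.ofReal ((2:ℝ) ^ (-(n:ℝ)*(h+ε))) ≤ ν {x}} with hTyp
  -- complement bound
  have hsub : Typᶜ ⊆ SmallSet μ h ε n ∪ ZeroSet μ n := by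
    intro x hx
    rw [Set.mem_compl_iff, hTyp, Set.mem_setOf_eq, not_le] at hx
    rcases eq_or_ne (ν {x}) 0 with h0 | h0
    · exact Or.inr h0
    · exact Or.inl ⟨h0, hx⟩
  have hcompl : μ ((proj X n ⁻¹' Typ)ᶜ) < ENNReal.ofReal (1 - c) := by
    have : (proj X n ⁻¹' Typ)ᶜ = proj X n ⁻¹' Typᶜ := rfl
    rw [this]
    calc μ (proj X n ⁻¹' Typᶜ)
        ≤ μ (proj X n ⁻¹' (SmallSet μ h ε n ∪ ZeroSet μ n)) :=
          measure_mono (Set.preimage_mono hsub)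
      _ ≤ μ (proj X n ⁻¹' SmallSet μ h ε n) + μ (proj X n ⁻¹' ZeroSet μ n) := by
          rw [Set.preimage_union]; exact measure_union_le _ _
      _ ≤ μ (proj X n ⁻¹' (Bad μ h ε n)) + ν (ZeroSet μ n) :=
          add_le_add (measure_mono (Set.preimage_mono (small_subset_bad μ hn hε)))
            (le_marginal μ n _)
      _ = μ (proj X n ⁻¹' (Bad μ h ε n)) := by rw [zeroSet_null μ n, add_zero]
      _ < ENNReal.ofReal (1 - c) := hbad
  have hTypc : ENNReal.ofReal c ≤ ν Typ := by
    have hone : (1 : ENNReal) ≤ μ (proj X n ⁻¹' Typ) + μ ((proj X n ⁻¹' Typ)ᶜ) := by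
      rw [← measure_univ (μ := μ), ← Set.union_compl_self (proj X n ⁻¹' Typ)]
      exact measure_union_le _ _
    have hsplit : ENNReal.ofReal c + ENNReal.ofReal (1-c) = 1 := by
      rw [← ENNReal.ofReal_add (by linarith) (by linarith)]
      norm_num
    have : ENNReal.ofReal c + ENNReal.ofReal (1-c)
        ≤ μ (proj X n ⁻¹' Typ) + ENNReal.ofReal (1-c) := by
      rw [hsplit]
      exact hone.trans (add_le_add le_rfl (le_of_lt hcompl))
    have := (ENNReal.add_le_add_iff_right ENNReal.ofReal_ne_top).1 this
    exact this.trans (le_marginal μ n Typ)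
  -- representatives
  obtain ⟨S, hS1, hS2⟩ := reps_lemma ν (Set.toFinite Typ)
    (level_saturated ν (fun m => ENNReal.ofReal ((2:ℝ) ^ (-(n:ℝ)*(h+ε))) ≤ m))
    (fun x hx => hx)
  have hmem : (1 / (n : ℝ)) * Real.logb 2 (S.card : ℝ) ∈ Dset μ c n :=
    ⟨S, hTypc.trans hS1, rfl⟩
  have hkpos : 1 ≤ S.card := card_pos_of_meas μ hc0 (hTypc.trans hS1)
  have hcount : (S.card : ℝ) * (2:ℝ) ^ (-(n:ℝ)*(h+ε)) ≤ 1 := by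
    refine ennreal_count_le (le_of_lt (rpow_pos_of_pos two_pos _)) ?_
    exact hS2.trans prob_le_one
  rw [minLogCard_eq]
  exact (csInf_le (Dset_bddBelow μ hc0 n) hmem).trans (log_card_le hn hkpos hcount)

lemma forward_lower {h : ℝ} (haep : HasAEP μ h) {c ε : ℝ} (hc0 : 0 < c) (hc1 : c < 1)
    (hε : 0 < ε) : ∀ᶠ n in atTop, h - ε ≤ minLogCard μ c n := by
  have hε2 : 0 < ε/2 := by linarith
  have h1 : ∀ᶠ n in atTop, μ (proj X n ⁻¹' (Bad μ h (ε/2) n)) < ENNReal.ofReal (c/2) :=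
    (aep_bad μ haep hε2).eventually_lt_const (ENNReal.ofReal_pos.2 (by linarith))
  have h2 : ∀ᶠ n : ℕ in atTop, -(ε/2) < (1/(n:ℝ)) * logb 2 (c/2) := by
    have : Tendsto (fun n : ℕ => (1/(n:ℝ)) * logb 2 (c/2)) atTop (nhds 0) := by
      simpa using tendsto_one_div_atTop_nhds_zero_nat.mul_const (logb 2 (c/2))
    exact this.eventually_const_lt (by linarith)
  filter_upwards [h1, h2, eventually_ge_atTop 1] with n hbad hlog hn
  haveI := marginal_isProb μ n
  set ν := marginal μ n with hν
  rw [minLogCard_eq]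
  refine le_csInf (Dset_nonempty μ (le_of_lt hc1) n) ?_
  rintro r ⟨S, hS, rfl⟩
  classical
  set Big := BigSet μ h (ε/2) n with hBig
  have hBigMeas : MeasurableSet Big :=
    level_measurableSet ν (fun m => ENNReal.ofReal ((2:ℝ) ^ (-(n:ℝ)*(h-ε/2))) < m)
  have hBigSmall : ν Big < ENNReal.ofReal (c/2) := by
    rw [hBig, show BigSet μ h (ε/2) n = {x | ENNReal.ofReal ((2:ℝ) ^ (-(n:ℝ)*(h-ε/2))) < ν {x}} from rfl]
    calc ν {x | ENNReal.ofReal ((2:ℝ) ^ (-(n:ℝ)*(h-ε/2))) < ν {x}}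
        = μ (proj X n ⁻¹' (BigSet μ h (ε/2) n)) := marginal_apply μ n hBigMeas
      _ ≤ μ (proj X n ⁻¹' (Bad μ h (ε/2) n)) :=
          measure_mono (Set.preimage_mono (big_subset_bad μ hn hε2))
      _ < ENNReal.ofReal (c/2) := hbad
  -- split S
  have hsplit : ν ↑S ≤ ν (↑S ∩ Big) + ν (↑S \ Big) :=
    le_of_eq (measure_inter_add_diff (↑S) hBigMeas).symm
  set T := S.filter (fun x => x ∉ Big) with hT
  have hdiff : ν (↑S \ Big) ≤ T.card * ENNReal.ofReal ((2:ℝ) ^ (-(n:ℝ)*(h-ε/2))) := by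
    have hsubT : (↑S \ Big : Set _) ⊆ ↑T := by
      intro x hx
      simp only [hT, Finset.coe_filter, Set.mem_setOf_eq]
      exact ⟨hx.1, hx.2⟩
    refine le_trans (measure_mono hsubT) (meas_le_card_mul ν T _ ?_)
    intro x hx
    rw [hT, Finset.mem_filter] at hx
    have := hx.2
    rw [hBig, BigSet, Set.mem_setOf_eq, not_lt] at this
    exact this
  have hkey : ENNReal.ofReal (c/2) ≤ (S.card : ENNReal) * ENNReal.ofReal ((2:ℝ) ^ (-(n:ℝ)*(h-ε/2))) := by
    have hTS : (T.card : ENNReal) ≤ (S.card : ENNReal) := by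
      exact_mod_cast Finset.card_filter_le S _
    have h4 : ENNReal.ofReal (c/2) + ENNReal.ofReal (c/2)
        ≤ ENNReal.ofReal (c/2) + (S.card : ENNReal) * ENNReal.ofReal ((2:ℝ) ^ (-(n:ℝ)*(h-ε/2))) := by
      calc ENNReal.ofReal (c/2) + ENNReal.ofReal (c/2) = ENNReal.ofReal c := by
            rw [← ENNReal.ofReal_add (by linarith) (by linarith)]; norm_num
        _ ≤ ν ↑S := hS
        _ ≤ ν (↑S ∩ Big) + ν (↑S \ Big) := hsplit
        _ ≤ ENNReal.ofReal (c/2) + (S.card : ENNReal) * ENNReal.ofReal ((2:ℝ) ^ (-(n:ℝ)*(h-ε/2))) := by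
            gcongr
            · exact (measure_mono Set.inter_subset_right).trans (le_of_lt hBigSmall)
            · exact hdiff.trans (by gcongr)
    exact (ENNReal.add_le_add_iff_left ENNReal.ofReal_ne_top).1 h4
  have hreal : c/2 ≤ (S.card : ℝ) * (2:ℝ) ^ (-(n:ℝ)*(h-ε/2)) :=
    ennreal_count_ge (le_of_lt (rpow_pos_of_pos two_pos _)) hkey
  have := log_card_ge hn (by linarith : (0:ℝ) < c/2) hreal
  linarith
end main

section back
variable {X : Type} [Fintype X] [Nonempty X] [MeasurableSpace X]
variable (μ : Measure (ℕ → X)) [IsProbabilityMeasure μ]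

lemma extract_r {δ : ENNReal} (hδ : 0 < δ) :
    ∃ r : ℝ, 0 < r ∧ r ≤ 1 ∧ ENNReal.ofReal r ≤ δ := by
  refine ⟨(min δ 1).toReal, ?_, ?_, ?_⟩
  · exact ENNReal.toReal_pos (by simp [lt_min hδ (by norm_num : (0:ENNReal) < 1), ne_of_gt (lt_min hδ (by norm_num : (0:ENNReal) < 1))])
      (ne_top_of_le_ne_top ENNReal.one_ne_top (min_le_right _ _))
  · calc (min δ 1).toReal ≤ (1 : ENNReal).toReal :=
        ENNReal.toReal_mono ENNReal.one_ne_top (min_le_right _ _)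
      _ = 1 := by simp
  · rw [ENNReal.ofReal_toReal (ne_top_of_le_ne_top ENNReal.one_ne_top (min_le_right _ _))]
    exact min_le_left _ _

lemma backward_big {h : ℝ}
    (H : ∀ c : ℝ, 0 < c → c < 1 → Tendsto (fun n : ℕ => minLogCard μ c n) atTop (nhds h))
    {ε : ℝ} (hε : 0 < ε) :
    Tendsto (fun n : ℕ => marginal μ n (BigSet μ h ε n)) atTop (nhds 0) := by
  rw [ENNReal.tendsto_atTop_zero]
  intro δ hδ
  by_contra hcon
  push_neg at hcon
  obtain ⟨r, hrpos, hr1, hofr⟩ := extract_r hδ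
  have hfreq : ∃ᶠ n in atTop, ENNReal.ofReal r ≤ marginal μ n (BigSet μ h ε n) := by
    rw [frequently_atTop]
    intro N; obtain ⟨n, hnN, hn⟩ := hcon N
    exact ⟨n, hnN, hofr.trans (le_of_lt hn)⟩
  have hc0 : 0 < r/2 := by linarith
  have hc1 : r/2 < 1 := by linarith
  have hev : ∀ᶠ n : ℕ in atTop, h - ε < minLogCard μ (r/2) n :=
    (H (r/2) hc0 hc1).eventually_const_lt (by linarith)
  obtain ⟨n, hbig, hmin, hn⟩ := (hfreq.and_eventually (hev.and (eventually_ge_atTop 1))).exists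
  haveI := marginal_isProb μ n
  set ν := marginal μ n with hν
  obtain ⟨S, hS1, hS2⟩ := reps_lemma ν (Set.toFinite (BigSet μ h ε n))
    (level_saturated ν (fun m => ENNReal.ofReal ((2:ℝ) ^ (-(n:ℝ)*(h-ε))) < m))
    (fun x hx => le_of_lt hx)
  have hSmeas : ENNReal.ofReal (r/2) ≤ ν ↑S :=
    ((ENNReal.ofReal_le_ofReal (by linarith)).trans hbig).trans hS1
  have hmem : (1 / (n : ℝ)) * Real.logb 2 (S.card : ℝ) ∈ Dset μ (r/2) n := ⟨S, hSmeas, rfl⟩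
  have hk : 1 ≤ S.card := card_pos_of_meas μ hc0 hSmeas
  have hcount : (S.card : ℝ) * (2:ℝ) ^ (-(n:ℝ)*(h-ε)) ≤ 1 :=
    ennreal_count_le (le_of_lt (rpow_pos_of_pos two_pos _)) (hS2.trans prob_le_one)
  have h1 : minLogCard μ (r/2) n ≤ h - ε := by
    rw [minLogCard_eq]
    exact (csInf_le (Dset_bddBelow μ hc0 n) hmem).trans (log_card_le hn hk hcount)
  linarith [hmin]

end back

section back2
variable {X : Type} [Fintype X] [Nonempty X] [MeasurableSpace X]
variable (μ : Measure (ℕ → X)) [IsProbabilityMeasure μ]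

lemma backward_small {h : ℝ}
    (H : ∀ c : ℝ, 0 < c → c < 1 → Tendsto (fun n : ℕ => minLogCard μ c n) atTop (nhds h))
    {ε : ℝ} (hε : 0 < ε) :
    Tendsto (fun n : ℕ => marginal μ n (SmallSet μ h ε n)) atTop (nhds 0) := by
  rw [ENNReal.tendsto_atTop_zero]
  intro δ hδ
  by_contra hcon
  push_neg at hcon
  obtain ⟨r, hrpos, hr1, hofr⟩ := extract_r hδ
  have hfreq : ∃ᶠ n in atTop, ENNReal.ofReal r ≤ marginal μ n (SmallSet μ h ε n) := by
    rw [frequently_atTop]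
    intro N; obtain ⟨n, hnN, hn⟩ := hcon N
    exact ⟨n, hnN, hofr.trans (le_of_lt hn)⟩
  have hc0 : 0 < 1 - r/2 := by linarith
  have hc1 : 1 - r/2 < 1 := by linarith
  have hev1 : ∀ᶠ n : ℕ in atTop, minLogCard μ (1 - r/2) n < h + ε/2 :=
    (H (1 - r/2) hc0 hc1).eventually_lt_const (by linarith)
  have hev2 : ∀ᶠ n : ℕ in atTop, -(ε/2) < (1/(n:ℝ)) * logb 2 (r/2) := by
    have : Tendsto (fun n : ℕ => (1/(n:ℝ)) * logb 2 (r/2)) atTop (nhds 0) := by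
      simpa using tendsto_one_div_atTop_nhds_zero_nat.mul_const (logb 2 (r/2))
    exact this.eventually_const_lt (by linarith)
  obtain ⟨n, hsmall, hmin, hlog, hn⟩ :=
    (hfreq.and_eventually (hev1.and (hev2.and (eventually_ge_atTop 1)))).exists
  haveI := marginal_isProb μ n
  set ν := marginal μ n with hν
  classical
  rw [minLogCard_eq] at hmin
  obtain ⟨rr, hrrmem, hrrlt⟩ :=
    exists_lt_of_csInf_lt (Dset_nonempty μ (le_of_lt hc1) n) hmin
  obtain ⟨S, hS, rfl⟩ := hrrmem
  set Small := SmallSet μ h ε n with hSmall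
  have hSmallMeas : MeasurableSet Small :=
    level_measurableSet ν
      (fun m => m ≠ 0 ∧ m < ENNReal.ofReal ((2:ℝ) ^ (-(n:ℝ)*(h+ε))))
  set T := S.filter (fun x => x ∈ Small) with hT
  have hinter : ν (↑S ∩ Small) ≤ T.card * ENNReal.ofReal ((2:ℝ) ^ (-(n:ℝ)*(h+ε))) := by
    have hsubT : (↑S ∩ Small : Set _) ⊆ ↑T := by
      intro x hx
      simp only [hT, Finset.coe_filter, Set.mem_setOf_eq]
      exact ⟨hx.1, hx.2⟩
    refine le_trans (measure_mono hsubT) (meas_le_card_mul ν T _ ?_)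
    intro x hx
    rw [hT, Finset.mem_filter] at hx
    exact le_of_lt hx.2.2
  have hdiff : ν (↑S \ Small) ≤ ENNReal.ofReal (1 - r) := by
    calc ν (↑S \ Small) ≤ ν Smallᶜ := measure_mono (Set.diff_subset_compl _ _)
      _ = 1 - ν Small := by rw [measure_compl hSmallMeas (measure_ne_top _ _), measure_univ]
      _ ≤ 1 - ENNReal.ofReal r := tsub_le_tsub_left hsmall _
      _ = ENNReal.ofReal (1 - r) := by
          rw [ENNReal.ofReal_sub _ (le_of_lt hrpos), ENNReal.ofReal_one]
  have hkey : ENNReal.ofReal (r/2)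
      ≤ (S.card : ENNReal) * ENNReal.ofReal ((2:ℝ) ^ (-(n:ℝ)*(h+ε))) := by
    have h4 : ENNReal.ofReal (r/2) + ENNReal.ofReal (1-r)
        ≤ (S.card : ENNReal) * ENNReal.ofReal ((2:ℝ) ^ (-(n:ℝ)*(h+ε)))
          + ENNReal.ofReal (1-r) := by
      calc ENNReal.ofReal (r/2) + ENNReal.ofReal (1-r) = ENNReal.ofReal (1 - r/2) := by
            rw [← ENNReal.ofReal_add (by linarith) (by linarith)]; ring_nf
        _ ≤ ν ↑S := hS
        _ = ν (↑S ∩ Small) + ν (↑S \ Small) := (measure_inter_add_diff (↑S) hSmallMeas).symm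
        _ ≤ (S.card : ENNReal) * ENNReal.ofReal ((2:ℝ) ^ (-(n:ℝ)*(h+ε)))
            + ENNReal.ofReal (1-r) := by
            refine add_le_add (hinter.trans ?_) hdiff
            exact mul_le_mul_left (by exact_mod_cast Finset.card_filter_le S _) _
    exact (ENNReal.add_le_add_iff_right ENNReal.ofReal_ne_top).1 h4
  have hreal : r/2 ≤ (S.card : ℝ) * (2:ℝ) ^ (-(n:ℝ)*(h+ε)) :=
    ennreal_count_ge (le_of_lt (rpow_pos_of_pos two_pos _)) hkey
  have := log_card_ge hn (by linarith : (0:ℝ) < r/2) hreal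
  linarith

lemma backward_aep {h : ℝ}
    (H : ∀ c : ℝ, 0 < c → c < 1 → Tendsto (fun n : ℕ => minLogCard μ c n) atTop (nhds h)) :
    HasAEP μ h := by
  intro ε hε
  have hsum : Tendsto (fun n : ℕ =>
      marginal μ n (SmallSet μ h ε n) + marginal μ n (BigSet μ h ε n)) atTop (nhds 0) := by
    have := (backward_small μ H hε).add (backward_big μ H hε)
    simpa using this
  refine tendsto_of_tendsto_of_tendsto_of_le_of_le' tendsto_const_nhds hsum
    (Eventually.of_forall fun n => zero_le) ?_
  filter_upwards [eventually_ge_atTop 1] with n hn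
  calc μ {ω : ℕ → X | ε < |(-(1 / (n : ℝ)) *
          Real.logb 2 ((marginal μ n {fun i : Fin n => ω (i : ℕ)}).toReal)) - h|}
      = μ (proj X n ⁻¹' (Bad μ h ε n)) := rfl
    _ ≤ μ (proj X n ⁻¹' (SmallSet μ h ε n ∪ BigSet μ h ε n ∪ ZeroSet μ n)) :=
        measure_mono (Set.preimage_mono (bad_subset μ hn))
    _ ≤ μ (proj X n ⁻¹' (SmallSet μ h ε n ∪ BigSet μ h ε n)) + μ (proj X n ⁻¹' ZeroSet μ n) := by
        rw [Set.preimage_union]; exact measure_union_le _ _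
    _ ≤ (μ (proj X n ⁻¹' SmallSet μ h ε n) + μ (proj X n ⁻¹' BigSet μ h ε n))
        + marginal μ n (ZeroSet μ n) := by
        refine add_le_add ?_ (le_marginal μ n _)
        rw [Set.preimage_union]; exact measure_union_le _ _
    _ = μ (proj X n ⁻¹' SmallSet μ h ε n) + μ (proj X n ⁻¹' BigSet μ h ε n) := by
        rw [zeroSet_null μ n, add_zero]
    _ ≤ marginal μ n (SmallSet μ h ε n) + marginal μ n (BigSet μ h ε n) :=
        add_le_add (le_marginal μ n _) (le_marginal μ n _)


end back2

theorem aep_iff_min_highprob_subset_size {X : Type} [Fintype X] [Nonempty X]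
    [MeasurableSpace X] (μ : Measure (ℕ → X)) [IsProbabilityMeasure μ] (h : ℝ) :
    HasAEP μ h ↔
      ∀ c : ℝ, 0 < c → c < 1 →
        Tendsto (fun n : ℕ => minLogCard μ c n) atTop (nhds h) := by
  constructor
  · intro haep c hc0 hc1
    rw [Metric.tendsto_atTop]
    intro ε hε
    have hu := forward_upper μ haep hc0 hc1 (half_pos hε)
    have hl := forward_lower μ haep hc0 hc1 (half_pos hε)
    obtain ⟨N, hN⟩ := eventually_atTop.1 (hu.and hl)
    refine ⟨N, fun n hn => ?_⟩
    obtain ⟨h1, h2⟩ := hN n hn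
    rw [Real.dist_eq, abs_lt]
    constructor <;> linarith
  · exact backward_aep μ

end
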